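/- arXiv:2405.12758 — 4 statements merged into one kernel-verified Lean document; each statement's English description precedes it below -/
import Mathlib

section
/- For every 3-element subset σ of {1,...,n}, σ ≤_p {1,3,n} if and only if σ ≤_lex {1,3,n}. -/
/-- The dominance (componentwise) order on finite subsets of ℕ. -/
def lep (A B : Finset ℕ) : Prop :=
  List.Forall₂ (· ≤ ·) (A.sort (· ≤ ·)) (B.sort (· ≤ ·))

/-- The lexicographic order on finite subsets of ℕ. -/
def lexle (A B : Finset ℕ) : Prop :=
  A = B ∨ ∃ x ∈ symmDiff A B, x ∈ A ∧ ∀ y ∈ symmDiff A B, x ≤ y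

/-- For every 3-element subset σ of {1,...,n},
`σ ≤_p {1,3,n}` if and only if `σ ≤_lex {1,3,n}`. -/
theorem stmt_2 (n : ℕ) (hn : 4 ≤ n) (σ : Finset ℕ)
    (hσsub : σ ⊆ Finset.Icc 1 n) (hσ : σ.card = 3) :
    lep σ {1, 3, n} ↔ lexle σ {1, 3, n} := by
  -- sort of the target
  have hT : ({1, 3, n} : Finset ℕ).sort (· ≤ ·) = [1, 3, n] := by
    rw [show ({1,3,n} : Finset ℕ) = insert 1 (insert 3 {n}) from rfl]
    rw [Finset.sort_insert, Finset.sort_insert, Finset.sort_singleton]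
    · intro b hb; simp at hb; omega
    · simp; omega
    · intro b hb; simp at hb; rcases hb with h | h <;> omega
    · simp; omega
  -- sort of σ
  have hlen : (σ.sort (· ≤ ·)).length = 3 := by
    rw [Finset.length_sort, hσ]
  obtain ⟨a, b, c, hl⟩ := List.length_eq_three.mp hlen
  have hsorted := List.sortedLT_iff_pairwise.mp σ.sortedLT_sort
  rw [hl] at hsorted
  have hab : a < b := by
    simpa using List.rel_of_pairwise_cons hsorted (show b ∈ [b, c] by simp)
  have hbc : b < c := by
    have := List.rel_of_pairwise_cons (List.pairwise_cons.mp hsorted).2 (show c ∈ [c] by simp)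
    simpa using this
  have hmem : ∀ x, x ∈ σ ↔ (x = a ∨ x = b ∨ x = c) := by
    intro x
    rw [← Finset.mem_sort (· ≤ ·), hl]; simp
  have ha1 : 1 ≤ a := by
    have := hσsub ((hmem a).mpr (Or.inl rfl)); simp [Finset.mem_Icc] at this; omega
  have hcn : c ≤ n := by
    have := hσsub ((hmem c).mpr (Or.inr (Or.inr rfl))); simp [Finset.mem_Icc] at this
    omega
  have hlep : lep σ {1, 3, n} ↔ (a ≤ 1 ∧ b ≤ 3 ∧ c ≤ n) := by
    rw [lep, hT, hl]
    constructor
    · intro h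
      rcases h with _ | ⟨h1, h⟩; rcases h with _ | ⟨h2, h⟩; rcases h with _ | ⟨h3, _⟩
      exact ⟨h1, h2, h3⟩
    · rintro ⟨h1, h2, h3⟩
      exact List.Forall₂.cons h1 (List.Forall₂.cons h2 (List.Forall₂.cons h3 List.Forall₂.nil))
  have hmemT : ∀ x, x ∈ ({1, 3, n} : Finset ℕ) ↔ (x = 1 ∨ x = 3 ∨ x = n) := by
    intro x; simp
  have hmemSD : ∀ x, x ∈ symmDiff σ ({1, 3, n} : Finset ℕ) ↔
      ((x ∈ σ ∧ x ∉ ({1,3,n} : Finset ℕ)) ∨ (x ∈ ({1,3,n} : Finset ℕ) ∧ x ∉ σ)) := by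
    intro x; exact Finset.mem_symmDiff
  rw [hlep]
  constructor
  · rintro ⟨h1, h2, h3⟩
    have ha : a = 1 := le_antisymm h1 ha1
    by_cases heq : σ = ({1, 3, n} : Finset ℕ)
    · exact Or.inl heq
    right
    -- b = 2 or b = 3
    have hb : b = 2 ∨ b = 3 := by omega
    rcases hb with hb | hb
    · -- x = 2
      refine ⟨2, ?_, (hmem 2).mpr (Or.inr (Or.inl hb.symm)), ?_⟩
      · rw [hmemSD]
        left
        refine ⟨(hmem 2).mpr (Or.inr (Or.inl hb.symm)), ?_⟩
        rw [hmemT]; omega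
      · intro y hy
        rw [hmemSD] at hy
        rcases hy with ⟨hy1, hy2⟩ | ⟨hy1, hy2⟩
        · rw [hmem] at hy1
          rw [hmemT] at hy2
          omega
        · rw [hmemT] at hy1
          rw [hmem] at hy2
          omega
    · -- σ = {1, 3, c}, c < n, x = c
      have hcn' : c ≠ n := by
        intro h
        apply heq
        apply Finset.ext
        intro x
        rw [hmem, hmemT]
        omega
      refine ⟨c, ?_, (hmem c).mpr (Or.inr (Or.inr rfl)), ?_⟩
      · rw [hmemSD]
        left
        refine ⟨(hmem c).mpr (Or.inr (Or.inr rfl)), ?_⟩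
        rw [hmemT]; omega
      · intro y hy
        rw [hmemSD] at hy
        rcases hy with ⟨hy1, hy2⟩ | ⟨hy1, hy2⟩
        · rw [hmem] at hy1; rw [hmemT] at hy2; omega
        · rw [hmemT] at hy1; rw [hmem] at hy2; omega
  · rintro (heq | ⟨x, hx, hxσ, hxmin⟩)
    · have : σ.sort (· ≤ ·) = [1, 3, n] := by rw [heq, hT]
      rw [hl] at this
      injection this with e1 this; injection this with e2 this; injection this with e3
      refine ⟨by omega, by omega, by omega⟩
    · refine ⟨?_, ?_, hcn⟩
      · by_contra h
        have h1 : (1 : ℕ) ∉ σ := by rw [hmem]; omega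
        have h1sd : (1 : ℕ) ∈ symmDiff σ ({1,3,n} : Finset ℕ) := by
          rw [hmemSD]; right; exact ⟨(hmemT 1).mpr (Or.inl rfl), h1⟩
        have hx1 := hxmin 1 h1sd
        rw [hmem] at hxσ
        omega
      · by_contra h
        have ha : a = 1 := by
          -- reuse the previous argument: a ≤ 1
          by_contra ha'
          have h1 : (1 : ℕ) ∉ σ := by rw [hmem]; omega
          have h1sd : (1 : ℕ) ∈ symmDiff σ ({1,3,n} : Finset ℕ) := by
            rw [hmemSD]; right; exact ⟨(hmemT 1).mpr (Or.inl rfl), h1⟩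
          have hx1 := hxmin 1 h1sd
          rw [hmem] at hxσ
          omega
        have h3 : (3 : ℕ) ∉ σ := by rw [hmem]; omega
        have h3sd : (3 : ℕ) ∈ symmDiff σ ({1,3,n} : Finset ℕ) := by
          rw [hmemSD]; right; exact ⟨(hmemT 3).mpr (Or.inr (Or.inl rfl)), h3⟩
        have hx3 := hxmin 3 h3sd
        rw [hmemSD] at hx
        rw [hmem] at hxσ
        rcases hx with ⟨hx1, hx2⟩ | ⟨hx1, hx2⟩
        · rw [hmemT] at hx2; omega
        · rw [hmem] at hx2; omega
end

section
/- Let 3 ≤ k < n-1. For a 3-element subset σ of {1,...,n}, σ is NOT ≤_p {1, k, n} if and only if σ ≥_lex {1, k+1, k+2}. -/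
lemma sort_triple {a b c : ℕ} (hab : a < b) (hbc : b < c) :
    ({a, b, c} : Finset ℕ).sort (· ≤ ·) = [a, b, c] := by
  rw [Finset.sort_insert, Finset.sort_insert, Finset.sort_singleton]
  · simp; omega
  · simp; omega
  · simp; omega
  · simp; omega

/-- Let 3 ≤ k < n - 1. For a 3-element subset σ of {1,...,n},
σ is NOT `≤_p {1, k, n}` iff `σ ≥_lex {1, k + 1, k + 2}`. -/
theorem stmt_4 (k n : ℕ) (hk : 3 ≤ k) (hkn : k + 1 < n)
    (σ : Finset ℕ) (hσsub : σ ⊆ Finset.Icc 1 n) (hσ : σ.card = 3) :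
    ¬ lep σ {1, k, n} ↔ lexle {1, k + 1, k + 2} σ := by
  have hsort := (Finset.sortedLT_sort σ).pairwise
  have hlen : (σ.sort (· ≤ ·)).length = 3 := by rw [Finset.length_sort, hσ]
  rcases e : σ.sort (· ≤ ·) with _ | ⟨a, _ | ⟨b, _ | ⟨c, _ | _⟩⟩⟩ <;> rw [e] at hlen <;>
    simp at hlen
  rw [e] at hsort
  simp [List.pairwise_cons] at hsort
  obtain ⟨⟨h1, -⟩, h2⟩ := hsort
  have hσeq : σ = {a, b, c} := by
    ext x
    rw [← Finset.mem_sort (· ≤ ·), e]; simp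
  subst hσeq
  have ha1 : 1 ≤ a := by have := hσsub (by simp : a ∈ ({a,b,c} : Finset ℕ)); simp at this; omega
  have hcn : c ≤ n := by have := hσsub (by simp : c ∈ ({a,b,c} : Finset ℕ)); simp at this; omega
  have hlep : lep {a,b,c} {1, k, n} ↔ (a ≤ 1 ∧ b ≤ k ∧ c ≤ n) := by
    unfold lep
    rw [e, sort_triple (by omega : (1:ℕ) < k) (by omega : k < n)]
    simp [List.forall₂_cons]
  rw [hlep]
  constructor
  · intro hn
    unfold lexle
    rcases Nat.lt_or_ge 1 a with ha | ha
    · right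
      refine ⟨1, ?_, by simp, ?_⟩
      · rw [Finset.mem_symmDiff]; left; constructor
        · simp
        · simp; omega
      · intro y hy
        rw [Finset.mem_symmDiff] at hy
        rcases hy with ⟨hy, _⟩ | ⟨hy, _⟩ <;> simp at hy <;> omega
    · have ha' : a = 1 := by omega
      have hb : k < b := by omega
      subst ha'
      rcases Nat.lt_or_ge (k+1) b with hb2 | hb2
      · right
        refine ⟨k+1, ?_, by simp, ?_⟩
        · rw [Finset.mem_symmDiff]; left; constructor
          · simp
          · simp; omega
        · intro y hy
          rw [Finset.mem_symmDiff] at hy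
          rcases hy with ⟨hy, _⟩ | ⟨hy, hy2⟩ <;> simp at * <;> omega
      · have hb' : b = k + 1 := by omega
        subst hb'
        rcases Nat.lt_or_ge (k+2) c with hc2 | hc2
        · right
          refine ⟨k+2, ?_, by simp, ?_⟩
          · rw [Finset.mem_symmDiff]; left; constructor
            · simp
            · simp; omega
          · intro y hy
            rw [Finset.mem_symmDiff] at hy
            rcases hy with ⟨hy, hy2⟩ | ⟨hy, hy2⟩ <;> simp at * <;> omega
        · have hc' : c = k + 2 := by omega
          subst hc'
          left; rfl
  · intro hlex hcon
    obtain ⟨ha, hbk, -⟩ := hcon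
    have ha' : a = 1 := by omega
    subst ha'
    have hbA : b ∉ ({1, k+1, k+2} : Finset ℕ) := by simp; omega
    rcases hlex with heq | ⟨x, hx, hxA, hmin⟩
    · rw [heq] at hbA; simp at hbA
    · have hbs : b ∈ symmDiff ({1, k+1, k+2} : Finset ℕ) {1,b,c} := by
        rw [Finset.mem_symmDiff]; right; exact ⟨by simp, by simp at hbA ⊢; omega⟩
      have := hmin b hbs
      rw [Finset.mem_symmDiff] at hx
      simp at hxA
      rcases hx with ⟨hx1, hx2⟩ | ⟨hx1, hx2⟩ <;> simp at hx1 hx2 <;> omega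
end

section
/- Let S be a shifted simplicial complex on vertex set {1,...,n} with n ≥ 11, such that: (a) every 2-element subset σ with σ ≤_lex {3,n} is a face of S; (b) S has exactly 3n faces of size 2; (c) {5,6} is not a face of S. Then the faces of S of size 2 are exactly the 2-element subsets σ with σ ≤_lex {4,10}. -/
/-!
Index each edge `{a, b}`, `a < b`, by its smaller vertex `a`: the number of edges is the sum
over `a` of the sizes of the upper links `{b > a | {a, b} ∈ S}`. Hypothesis (a) makes the upper
links of `1, 2, 3` full, which accounts for `3n - 6` edges, and shiftedness together with
`{5, 6} ∉ S` empties the upper links of all `a ≥ 5`. So the upper link of `4` has exactly six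
elements; being an initial segment of `{5, ..., n}` by shiftedness, it is `{5, ..., 10}`.
-/

open Finset

theorem exists_lt_eq_pair_of_card_eq_two {σ : Finset ℕ} (h : #σ = 2) :
    ∃ a b, a < b ∧ σ = {a, b} := by
  obtain ⟨a, b, hne, rfl⟩ := card_eq_two.mp h
  rcases hne.lt_or_gt with h | h
  · exact ⟨a, b, h, rfl⟩
  · exact ⟨b, a, h, pair_comm a b⟩

theorem pair_eq_pair_iff_of_lt {a b c d : ℕ} (hab : a < b) (hcd : c < d) :
    ({a, b} : Finset ℕ) = {c, d} ↔ a = c ∧ b = d := by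
  constructor
  · intro h
    have hc : c ∈ ({a, b} : Finset ℕ) := h ▸ by simp
    have hd : d ∈ ({a, b} : Finset ℕ) := h ▸ by simp
    simp only [mem_insert, mem_singleton] at hc hd
    omega
  · rintro ⟨rfl, rfl⟩; rfl

theorem pair_subset_Icc {a b n : ℕ} (ha : 1 ≤ a) (hab : a < b) (hbn : b ≤ n) :
    ({a, b} : Finset ℕ) ⊆ Icc 1 n := by
  intro x hx
  simp only [mem_insert, mem_singleton] at hx
  rw [mem_Icc]
  omega

theorem sort_pair {a b : ℕ} (h : a < b) : ({a, b} : Finset ℕ).sort (· ≤ ·) = [a, b] := by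
  rw [sort_insert _ (by simp; omega) (by simp; omega), sort_singleton]

theorem lep_pair {a b c d : ℕ} (hab : a < b) (hcd : c < d) :
    lep {a, b} {c, d} ↔ a ≤ c ∧ b ≤ d := by
  simp [lep, sort_pair hab, sort_pair hcd]

theorem lexle_pair {a b c d : ℕ} (hab : a < b) (hcd : c < d) :
    lexle {a, b} {c, d} ↔ a < c ∨ (a = c ∧ b ≤ d) := by
  simp only [lexle, pair_eq_pair_iff_of_lt hab hcd, mem_symmDiff, mem_insert, mem_singleton]
  constructor
  · rintro (h | ⟨x, hx, hxA, hmin⟩)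
    · omega
    · have := hmin c; have := hmin d
      omega
  · rintro (h | ⟨rfl, h⟩)
    · exact .inr ⟨a, by omega, by omega, fun y hy => by omega⟩
    · rcases h.lt_or_eq with h | rfl
      · exact .inr ⟨b, by omega, by omega, fun y hy => by omega⟩
      · exact .inl ⟨rfl, rfl⟩

theorem Finset.eq_Ioc_of_forall_lt_of_downward_closed {D : Finset ℕ} {a : ℕ}
    (hlt : ∀ b ∈ D, a < b) (hclosed : ∀ b ∈ D, ∀ c, a < c → c ≤ b → c ∈ D) :
    D = Ioc a (a + #D) := by
  refine eq_of_subset_of_card_le (fun b hb => ?_) (by simp)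
  have hIoc : Ioc a b ⊆ D := fun c hc => hclosed b hb c (mem_Ioc.mp hc).1 (mem_Ioc.mp hc).2
  have hcard := card_le_card hIoc
  rw [Nat.card_Ioc] at hcard
  have := hlt b hb
  rw [mem_Ioc]
  omega

def IsShifted (n : ℕ) (S : Finset (Finset ℕ)) : Prop :=
  ∀ T ∈ S, ∀ σ ⊆ Icc 1 n, lep σ T → σ ∈ S

theorem IsShifted.pair_mem {n a b c d : ℕ} {S : Finset (Finset ℕ)} (hS : IsShifted n S)
    (hmem : {a, b} ∈ S) (hab : a < b) (hcd : c < d) (hc : 1 ≤ c) (hdn : d ≤ n)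
    (hca : c ≤ a) (hdb : d ≤ b) : {c, d} ∈ S :=
  hS _ hmem _ (pair_subset_Icc hc hcd hdn) ((lep_pair hcd hab).mpr ⟨hca, hdb⟩)

def upperLink (n : ℕ) (S : Finset (Finset ℕ)) (a : ℕ) : Finset ℕ :=
  (Ioc a n).filter fun b => {a, b} ∈ S

theorem mem_upperLink {n a b : ℕ} {S : Finset (Finset ℕ)} :
    b ∈ upperLink n S a ↔ a < b ∧ b ≤ n ∧ {a, b} ∈ S := by
  simp [upperLink, and_assoc]

theorem card_edges_eq_sum_card_upperLink {n : ℕ} {S : Finset (Finset ℕ)}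
    (hvert : ∀ T ∈ S, T ⊆ Icc 1 n) :
    #(S.filter fun σ => #σ = 2) = ∑ a ∈ Icc 1 n, #(upperLink n S a) := by
  rw [← card_sigma]
  symm
  refine card_bij (fun p _ => {p.1, p.2}) ?_ ?_ ?_
  · rintro ⟨a, b⟩ hp
    simp only [mem_sigma, mem_upperLink] at hp
    exact mem_filter.mpr ⟨hp.2.2.2, card_pair hp.2.1.ne⟩
  · rintro ⟨a, b⟩ hp ⟨c, d⟩ hq h
    simp only [mem_sigma, mem_upperLink] at hp hq
    obtain ⟨rfl, rfl⟩ := (pair_eq_pair_iff_of_lt hp.2.1 hq.2.1).mp h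
    rfl
  · intro σ hσ
    obtain ⟨hσS, hcard⟩ := mem_filter.mp hσ
    obtain ⟨a, b, hab, rfl⟩ := exists_lt_eq_pair_of_card_eq_two hcard
    have ha := mem_Icc.mp (hvert _ hσS (mem_insert_self a {b}))
    have hb := mem_Icc.mp (hvert _ hσS (by simp : b ∈ ({a, b} : Finset ℕ)))
    have haI : a ∈ Icc 1 n := mem_Icc.mpr ⟨ha.1, by omega⟩
    exact ⟨⟨a, b⟩, mem_sigma.mpr ⟨haI, mem_upperLink.mpr ⟨hab, hb.2, hσS⟩⟩, rfl⟩

theorem upperLink_eq_Ioc_of_le {n k a : ℕ} {S : Finset (Finset ℕ)}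
    (hlex : ∀ σ ⊆ Icc 1 n, #σ = 2 → lexle σ {k, n} → σ ∈ S) (hkn : k < n)
    (ha : 1 ≤ a) (hak : a ≤ k) : upperLink n S a = Ioc a n := by
  ext b
  rw [mem_upperLink, mem_Ioc]
  refine ⟨fun h => ⟨h.1, h.2.1⟩, fun ⟨hab, hbn⟩ => ⟨hab, hbn, ?_⟩⟩
  exact hlex _ (pair_subset_Icc ha hab hbn) (card_pair hab.ne)
    ((lexle_pair hab hkn).mpr (by omega))

theorem IsShifted.upperLink_eq_empty {n c a : ℕ} {S : Finset (Finset ℕ)} (hS : IsShifted n S)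
    (hc : 1 ≤ c) (hnot : {c, c + 1} ∉ S) (hca : c ≤ a) : upperLink n S a = ∅ :=
  eq_empty_of_forall_notMem fun b hb => by
    obtain ⟨hab, hbn, hmem⟩ := mem_upperLink.mp hb
    exact hnot (hS.pair_mem hmem hab c.lt_succ_self hc (by omega) hca (by omega))

theorem IsShifted.mem_upperLink_of_le {n a b c : ℕ} {S : Finset (Finset ℕ)} (hS : IsShifted n S)
    (ha : 1 ≤ a) (hb : b ∈ upperLink n S a) (hac : a < c) (hcb : c ≤ b) :
    c ∈ upperLink n S a := by
  obtain ⟨hab, hbn, hmem⟩ := mem_upperLink.mp hb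
  exact mem_upperLink.mpr ⟨hac, by omega, hS.pair_mem hmem hab hac ha (by omega) le_rfl hcb⟩

/-- Let S be a shifted complex on {1,...,n}, n ≥ 11, containing all pairs
`≤_lex {3,n}`, having exactly `3n` faces of size 2, and with `{5,6} ∉ S`.
Then the size-2 faces of S are exactly the pairs `≤_lex {4,10}`. -/
theorem stmt_14 (n : ℕ) (hn : 11 ≤ n) (S : Finset (Finset ℕ))
    (hvert : ∀ T ∈ S, T ⊆ Finset.Icc 1 n)
    (hshift : ∀ T ∈ S, ∀ σ ⊆ Finset.Icc 1 n, lep σ T → σ ∈ S)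
    (ha : ∀ σ ⊆ Finset.Icc 1 n, σ.card = 2 → lexle σ {3, n} → σ ∈ S)
    (hb : (S.filter (fun σ => σ.card = 2)).card = 3 * n)
    (hc : ({5, 6} : Finset ℕ) ∉ S) :
    ∀ σ ⊆ Finset.Icc 1 n, σ.card = 2 → (σ ∈ S ↔ lexle σ {4, 10}) := by
  have hS : IsShifted n S := hshift
  have hlow : ∀ a, 1 ≤ a → a ≤ 3 → upperLink n S a = Ioc a n := fun a h1 h3 =>
    upperLink_eq_Ioc_of_le ha (by omega) h1 h3
  have hhigh : ∀ a, 5 ≤ a → upperLink n S a = ∅ := fun a h5 =>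
    hS.upperLink_eq_empty (c := 5) (by norm_num) hc h5
  have hsum : 3 * n = (n - 1) + (n - 2) + (n - 3) + #(upperLink n S 4) := by
    rw [← hb, card_edges_eq_sum_card_upperLink hvert,
      ← sum_subset (Icc_subset_Icc_right (by omega : 4 ≤ n)) fun a ha ha' => by
        simp only [mem_Icc, not_and, not_le] at ha ha'
        rw [hhigh a (by omega), card_empty]]
    simp [sum_Icc_succ_top, hlow]
  have hlink4 : upperLink n S 4 = Ioc 4 10 := by
    rw [eq_Ioc_of_forall_lt_of_downward_closed (fun b hb => (mem_upperLink.mp hb).1)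
      fun b hb c => hS.mem_upperLink_of_le (by norm_num) hb]
    congr 1
    omega
  intro σ hσ hcard
  obtain ⟨a, b, hab, rfl⟩ := exists_lt_eq_pair_of_card_eq_two hcard
  have ha1 := mem_Icc.mp (hσ (mem_insert_self a {b}))
  have hbn := mem_Icc.mp (hσ (by simp : b ∈ ({a, b} : Finset ℕ)))
  have hmem : {a, b} ∈ S ↔ b ∈ upperLink n S a := by simp [mem_upperLink, hab, hbn.2]
  rw [hmem, lexle_pair hab (by norm_num : 4 < 10)]
  rcases (by omega : a ≤ 3 ∨ a = 4 ∨ 5 ≤ a) with h3 | rfl | h5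
  · rw [hlow a ha1.1 h3, mem_Ioc]; omega
  · rw [hlink4, mem_Ioc]; omega
  · rw [hhigh a h5]; simp only [notMem_empty, false_iff]; omega
end

section
/- Let K be a pure 2-dimensional simplicial complex that is internally 1-connected, i.e. K is C-connected for C the set of internal edges (edges containing an internal vertex): any two 2-faces are connected by a sequence of 2-faces in which consecutive faces intersect in an internal edge. Then any two internal vertices of K are joined by a path in K consisting of internal vertices. -/
/-- Internally 1-connected implies internally connected (Lemma 5.6): if `T`
is the set of triangles of a pure 2-dimensional complex, `I` its set of
internal vertices (each lying in some triangle), and any two triangles are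
joined by a chain of triangles in which consecutive triangles meet in an edge
containing an internal vertex, then any two internal vertices are joined by a
path whose vertices are all internal and whose consecutive vertices span an
edge of the complex. -/
theorem stmt_19 (T : Finset (Finset ℕ)) (I : Finset ℕ)
    (hT : ∀ t ∈ T, t.card = 3)
    (hI : ∀ v ∈ I, ∃ t ∈ T, v ∈ t)
    (hconn : ∀ σ ∈ T, ∀ σ' ∈ T, ∃ l : List (Finset ℕ),
      (∀ t ∈ l, t ∈ T) ∧ l.head? = some σ ∧ l.getLast? = some σ' ∧
      l.Chain' (fun a b => (a ∩ b).card = 2 ∧ ∃ v ∈ a ∩ b, v ∈ I)) :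
    ∀ u ∈ I, ∀ v ∈ I, ∃ p : List ℕ,
      p.head? = some u ∧ p.getLast? = some v ∧ (∀ w ∈ p, w ∈ I) ∧
      p.Chain' (fun a b => a ≠ b ∧ ∃ t ∈ T, a ∈ t ∧ b ∈ t) := by
  classical
  set step : ℕ → ℕ → Prop := fun a b => a ∈ I ∧ b ∈ I ∧ ∃ t ∈ T, a ∈ t ∧ b ∈ t with hstep
  have lemA : ∀ u v : ℕ, Relation.ReflTransGen step u v → v ∈ I →
      ∃ p : List ℕ, p.head? = some u ∧ p.getLast? = some v ∧ (∀ w ∈ p, w ∈ I) ∧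
        p.Chain' (fun a b => a ≠ b ∧ ∃ t ∈ T, a ∈ t ∧ b ∈ t) := by
    intro u v h hv
    induction h using Relation.ReflTransGen.head_induction_on with
    | refl => exact ⟨[v], rfl, rfl, by simpa using hv, List.isChain_singleton _⟩
    | head hab _ ih =>
      rename_i a b _
      obtain ⟨p, hh, hl, hmem, hch⟩ := ih
      by_cases hab' : a = b
      · exact ⟨p, hab' ▸ hh, hl, hmem, hch⟩
      · cases p with
        | nil => simp at hh
        | cons x xs =>
          have hxb : x = b := by simpa using hh
          refine ⟨a :: x :: xs, rfl, ?_, ?_, ?_⟩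
          · simpa [List.getLast?_cons_cons] using hl
          · intro w hw
            rcases List.mem_cons.mp hw with h1 | h2
            · exact h1 ▸ hab.1
            · exact hmem w h2
          · refine List.isChain_cons_cons.mpr ⟨⟨by rw [hxb]; exact hab', ?_⟩, hch⟩
            rw [hxb]; exact hab.2.2
  have lemB : ∀ l : List (Finset ℕ), (∀ t ∈ l, t ∈ T) →
      l.Chain' (fun a b => (a ∩ b).card = 2 ∧ ∃ v ∈ a ∩ b, v ∈ I) →
      ∀ σ, l.head? = some σ → ∀ σ', l.getLast? = some σ' →
      ∀ w ∈ σ, w ∈ I → ∀ w' ∈ σ', w' ∈ I → Relation.ReflTransGen step w w' := by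
    intro l
    induction l with
    | nil => simp
    | cons t rest ih =>
      intro hmem hch σ hσ σ' hσ' w hw hwI w' hw' hw'I
      have hσt : σ = t := by simpa using hσ.symm
      cases rest with
      | nil =>
        have hσ't : σ' = t := by simpa using hσ'.symm
        exact Relation.ReflTransGen.single
          ⟨hwI, hw'I, t, hmem t (by simp), hσt ▸ hw, hσ't ▸ hw'⟩
      | cons t2 rest2 =>
        obtain ⟨⟨_, x, hx, hxI⟩, hch2⟩ := List.isChain_cons_cons.mp hch
        have hxt := Finset.mem_inter.mp hx
        have h1 : step w x := ⟨hwI, hxI, t, hmem t (by simp), hσt ▸ hw, hxt.1⟩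
        have h2 := ih (fun u hu => hmem u (List.mem_cons_of_mem _ hu)) hch2 t2 rfl σ'
          (by simpa [List.getLast?_cons_cons] using hσ') x hxt.2 hxI w' hw' hw'I
        exact (Relation.ReflTransGen.single h1).trans h2
  intro u hu v hv
  obtain ⟨tu, htu, hutu⟩ := hI u hu
  obtain ⟨tv, htv, hvtv⟩ := hI v hv
  obtain ⟨l, hl, hh, hlast, hch⟩ := hconn tu htu tv htv
  exact lemA u v (lemB l hl hch tu hh tv hlast u hutu hu v hvtv hv) hv
end
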